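/- arXiv:2501.15333 — 4 statements merged into one kernel-verified Lean document; each statement's English description precedes it below -/
import Mathlib

section
/- For every Z > 0 there exist a number λ₀ = λ₀(Z) ≥ 1 and a number C₀ = C₀(Z) > 0, both depending only on Z, such that for every function u : [0,Z] → ℝ that is twice continuously differentiable with u(0) = 0 and u'(0) = 0, and for every λ ≥ λ₀, the following Carleman estimate for the operator d²/dz² holds: ∫₀^Z u''(z)² e^{−2λz} dz ≥ C₀ ∫₀^Z u''(z)² e^{−2λz} dz + C₀ λ ∫₀^Z (u'(z)² + λ² u(z)²) e^{−2λz} dz. -/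
/-!
Completing the square against the weight `w = e^{-2λz}`, whose derivative is `-2λw`, gives
`v'² w = (v' - λv)² w + λ (v² w)' + λ² v² w`; integrating, the boundary term is nonnegative when
`v(0) = 0`, so `λ² ∫ v² w ≤ ∫ v'² w`. Applied to `v = u'` and `v = u` this yields
`λ² ∫ u'² w ≤ ∫ u''² w` and `λ² ∫ u² w ≤ ∫ u'² w`, so for `λ ≥ 1` both `λ ∫ u'² w` and
`λ³ ∫ u² w` are at most `∫ u''² w`, which gives the estimate with `λ₀ = 1`, `C₀ = 1/3`.
-/

open Real intervalIntegral

section FirstOrder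

variable {v : ℝ → ℝ} (lam : ℝ)

theorem hasDerivAt_sq_mul_exp {z : ℝ} (hv : DifferentiableAt ℝ v z) :
    HasDerivAt (fun z => v z ^ 2 * exp (-2 * lam * z))
      ((2 * v z * deriv v z - 2 * lam * v z ^ 2) * exp (-2 * lam * z)) z := by
  have hsq := hv.hasDerivAt.fun_pow 2
  have hexp : HasDerivAt (fun z => exp (-2 * lam * z)) (exp (-2 * lam * z) * (-2 * lam * 1)) z :=
    ((hasDerivAt_id z).const_mul (-2 * lam)).exp
  have hprod : HasDerivAt (fun z => v z ^ 2 * exp (-2 * lam * z)) _ z := hsq.fun_mul hexp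
  convert hprod using 1
  push_cast
  ring

theorem integral_deriv_sq_mul_exp (hv : ContDiff ℝ 1 v) (a b : ℝ) :
    ∫ z in a..b, deriv v z ^ 2 * exp (-2 * lam * z) =
      (∫ z in a..b, (deriv v z - lam * v z) ^ 2 * exp (-2 * lam * z))
        + lam * (v b ^ 2 * exp (-2 * lam * b) - v a ^ 2 * exp (-2 * lam * a))
        + lam ^ 2 * ∫ z in a..b, v z ^ 2 * exp (-2 * lam * z) := by
  have hv₀ : Continuous v := hv.continuous
  have hv₁ : Continuous (deriv v) := hv.continuous_deriv le_rfl
  have hboundary : ∫ z in a..b, lam * ((2 * v z * deriv v z - 2 * lam * v z ^ 2) *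
      exp (-2 * lam * z)) = lam * (v b ^ 2 * exp (-2 * lam * b) - v a ^ 2 * exp (-2 * lam * a)) := by
    rw [integral_const_mul, integral_eq_sub_of_hasDerivAt
      (fun z _ => hasDerivAt_sq_mul_exp lam (hv.differentiable one_ne_zero z))
      (by apply Continuous.intervalIntegrable; fun_prop)]
  rw [← hboundary, ← integral_const_mul, ← integral_add, ← integral_add]
  · exact integral_congr fun z _ => by ring
  all_goals apply Continuous.intervalIntegrable; fun_prop

theorem carleman_estimate_first_derivative (hv : ContDiff ℝ 1 v) {a b : ℝ} (hab : a ≤ b)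
    (hva : v a = 0) (hlam : 0 ≤ lam) :
    lam ^ 2 * ∫ z in a..b, v z ^ 2 * exp (-2 * lam * z) ≤
      ∫ z in a..b, deriv v z ^ 2 * exp (-2 * lam * z) := by
  have hsquare : 0 ≤ ∫ z in a..b, (deriv v z - lam * v z) ^ 2 * exp (-2 * lam * z) :=
    integral_nonneg hab fun z _ => by positivity
  have hboundary : 0 ≤ lam * (v b ^ 2 * exp (-2 * lam * b) - v a ^ 2 * exp (-2 * lam * a)) := by
    rw [hva, zero_pow two_ne_zero, zero_mul, sub_zero]
    positivity
  rw [integral_deriv_sq_mul_exp lam hv]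
  linarith

end FirstOrder

/-- Carleman estimate for the operator `d²/dz²` with the Carleman weight
`φ_λ(z) = exp (-2 λ z)` (Theorem 4.1): for every `Z > 0` there exist `λ₀ = λ₀(Z) ≥ 1`
and `C₀ = C₀(Z) > 0` such that for every twice continuously differentiable `u`
with `u 0 = 0` and `u' 0 = 0`, and every `λ ≥ λ₀`,
`∫₀^Z u''² e^{-2λz} dz ≥ C₀ ∫₀^Z u''² e^{-2λz} dz + C₀ λ ∫₀^Z (u'² + λ² u²) e^{-2λz} dz`. -/
theorem carleman_estimate_second_derivative (Z : ℝ) (hZ : 0 < Z) :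
    ∃ lam₀ C₀ : ℝ, 1 ≤ lam₀ ∧ 0 < C₀ ∧
      ∀ u : ℝ → ℝ, ContDiff ℝ 2 u → u 0 = 0 → deriv u 0 = 0 →
      ∀ lam : ℝ, lam₀ ≤ lam →
      (∫ z in (0:ℝ)..Z, (deriv (deriv u) z) ^ 2 * Real.exp (-2 * lam * z)) ≥
        C₀ * (∫ z in (0:ℝ)..Z, (deriv (deriv u) z) ^ 2 * Real.exp (-2 * lam * z))
        + C₀ * lam *
          ∫ z in (0:ℝ)..Z,
            ((deriv u z) ^ 2 + lam ^ 2 * (u z) ^ 2) * Real.exp (-2 * lam * z) := by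
  refine ⟨1, 1 / 3, le_rfl, by norm_num, fun u hu hu₀ hu'₀ lam hlam => ?_⟩
  have hlam₀ : 0 ≤ lam := zero_le_one.trans hlam
  set I₂ := ∫ z in (0:ℝ)..Z, deriv (deriv u) z ^ 2 * exp (-2 * lam * z)
  set I₁ := ∫ z in (0:ℝ)..Z, deriv u z ^ 2 * exp (-2 * lam * z)
  set I₀ := ∫ z in (0:ℝ)..Z, u z ^ 2 * exp (-2 * lam * z)
  have hI₁ : lam ^ 2 * I₁ ≤ I₂ :=
    carleman_estimate_first_derivative lam (hu.deriv' (n := 1)) hZ.le hu'₀ hlam₀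
  have hI₀ : lam ^ 2 * I₀ ≤ I₁ :=
    carleman_estimate_first_derivative lam (hu.of_le one_le_two) hZ.le hu₀ hlam₀
  have hI₁_nonneg : 0 ≤ I₁ := integral_nonneg hZ.le fun z _ => by positivity
  have hsplit : ∫ z in (0:ℝ)..Z, (deriv u z ^ 2 + lam ^ 2 * u z ^ 2) * exp (-2 * lam * z) =
      I₁ + lam ^ 2 * I₀ := by
    have hu_cont : Continuous u := hu.continuous
    have hu'_cont : Continuous (deriv u) := hu.continuous_deriv one_le_two
    rw [← integral_const_mul, ← integral_add]
    · exact integral_congr fun z _ => by ring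
    all_goals apply Continuous.intervalIntegrable; fun_prop
  have hlamI₁ : lam * I₁ ≤ I₂ := calc
    lam * I₁ ≤ lam ^ 2 * I₁ := by gcongr; exact le_self_pow₀ hlam two_ne_zero
    _ ≤ I₂ := hI₁
  have hlamI₀ : lam ^ 3 * I₀ ≤ I₂ := calc
    lam ^ 3 * I₀ = lam * (lam ^ 2 * I₀) := by ring
    _ ≤ lam * I₁ := by gcongr
    _ ≤ I₂ := hlamI₁
  rw [hsplit]
  linarith
end

section
/- For all Z > 0, R > 0, ε ∈ (0,1) and 0 < k_min ≤ k_max there exist λ₁ ≥ 1 and C₁ > 0, depending only on R, Z, k_min, k_max and ε, with the following property (global strong convexity of J_λ). Let λ ≥ λ₁, let k ∈ [k_min, k_max], and let q₁, r₁, q₂, r₂ : [0,Z] → ℝ be twice continuously differentiable functions whose values, first derivatives and second derivatives are bounded in absolute value by R on [0,Z]. Set h₁ = q₂ − q₁ and h₂ = r₂ − r₁, and assume h₁(0) = h₁'(0) = h₂(0) = h₂'(0) = 0. Then J_λ(q₂,r₂) − J_λ(q₁,r₁) − 2 ∫₀^Z [L₁(q₁,r₁)(z)·L₁,lin(h₁,h₂)(z)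 + L₂(q₁,r₁)(z)·L₂,lin(h₁,h₂)(z)] e^{−2λz} dz ≥ C₁ e^{−2λZ} ∫₀^Z (h₁(z)² + h₁'(z)² + h₁''(z)² + h₂(z)² + h₂'(z)² + h₂''(z)²) dz. -/
/-- The nonlinear operator `L₁(q,r)` of equation (3.200). -/
noncomputable def L1 (ε k : ℝ) (q r : ℝ → ℝ) (z : ℝ) : ℝ :=
  deriv (deriv q) z + (2 * k / ε) * deriv q z * (deriv q z - deriv r z)
    + (1 / ε ^ 2) * (deriv q z - deriv r z) ^ 2
    - 2 * Real.sqrt k * deriv q z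
    - (deriv q z - deriv r z) / (ε * Real.sqrt k)

/-- The nonlinear operator `L₂(q,r)` of equation (3.21). -/
noncomputable def L2 (ε k : ℝ) (q r : ℝ → ℝ) (z : ℝ) : ℝ :=
  deriv (deriv r) z + (2 * k / ε) * deriv q z * (deriv q z - deriv r z)
    + (1 / ε ^ 2) * (deriv q z - deriv r z) ^ 2
    - 2 * Real.sqrt k * deriv q z
    - (deriv q z - deriv r z) / (ε * Real.sqrt k)

/-- The linearization of `L₁` at the base point `(q,r)`, applied to `(h₁,h₂)`. -/
noncomputable def L1lin (ε k : ℝ) (q r h₁ h₂ : ℝ → ℝ) (z : ℝ) : ℝ :=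
  deriv (deriv h₁) z
    + (2 * k / ε) * deriv h₁ z * (deriv q z - deriv r z)
    + (2 * k / ε) * deriv q z * (deriv h₁ z - deriv h₂ z)
    + (2 / ε ^ 2) * (deriv q z - deriv r z) * (deriv h₁ z - deriv h₂ z)
    - 2 * Real.sqrt k * deriv h₁ z
    - (deriv h₁ z - deriv h₂ z) / (ε * Real.sqrt k)

/-- The linearization of `L₂` at the base point `(q,r)`, applied to `(h₁,h₂)`. -/
noncomputable def L2lin (ε k : ℝ) (q r h₁ h₂ : ℝ → ℝ) (z : ℝ) : ℝ :=
  deriv (deriv h₂) z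
    + (2 * k / ε) * deriv h₁ z * (deriv q z - deriv r z)
    + (2 * k / ε) * deriv q z * (deriv h₁ z - deriv h₂ z)
    + (2 / ε ^ 2) * (deriv q z - deriv r z) * (deriv h₁ z - deriv h₂ z)
    - 2 * Real.sqrt k * deriv h₁ z
    - (deriv h₁ z - deriv h₂ z) / (ε * Real.sqrt k)

/-- The weighted Tikhonov-like functional `J_λ(q,r)` of (4.4) with the Carleman weight
`exp (-2 λ z)`. -/
noncomputable def Jfun (ε k lam Z : ℝ) (q r : ℝ → ℝ) : ℝ :=
  ∫ z in (0:ℝ)..Z, ((L1 ε k q r z) ^ 2 + (L2 ε k q r z) ^ 2) * Real.exp (-2 * lam * z)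

/-!
Both operators are `h'' +` a quadratic polynomial in the first derivatives. Hence, pointwise, the
second-order Taylor remainder of `J_λ` at `(q₁, r₁)` is `(h₁'' + G)² + (h₂'' + G)² + 2 (L₁ + L₂) N`,
where `G = O(|h₁'| + |h₂'|)` and `N = O(h₁'² + h₂'²)` uniformly under the a priori bounds, so it
dominates `(h₁''² + h₂''²)/2 - A (h₁'² + h₂'²)`. The weighted Poincaré inequality
`λ² ∫ f² e^{-2λz} ≤ ∫ f'² e^{-2λz}` for `f(0) = 0` lets the `h''` terms absorb the `h'` terms once
`λ² ≥ 4A`, and also bounds the `h, h'` terms; finally `e^{-2λz} ≥ e^{-2λZ}` on `[0, Z]`.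
-/

def lowerOrderPart (a b c e p s : ℝ) : ℝ :=
  a * p * (p - s) + b * (p - s) ^ 2 - c * p - e * (p - s)

def quadraticRemainder (a b u v : ℝ) : ℝ := a * u * (u - v) + b * (u - v) ^ 2

section Estimates

variable {a b c e K R p s u v : ℝ}

lemma abs_add_add_sub_sub_le (x y z w : ℝ) : |x + y - z - w| ≤ |x| + |y| + |z| + |w| :=
  abs_le.mpr ⟨by linarith [neg_abs_le x, neg_abs_le y, le_abs_self z, le_abs_self w],
    by linarith [le_abs_self x, le_abs_self y, neg_abs_le z, neg_abs_le w]⟩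

lemma lowerOrderPart_sub (a b c e p s p' s' : ℝ) :
    lowerOrderPart a b c e p' s' - lowerOrderPart a b c e p s
      = (p' - p) * (a * (p' - s') - c)
        + (p' - p - (s' - s)) * (a * p + b * (p - s + (p' - s')) - e) := by
  unfold lowerOrderPart; ring

lemma abs_lowerOrderPart_le (ha : |a| ≤ K) (hb : |b| ≤ K) (hc : |c| ≤ K) (he : |e| ≤ K)
    (hp : |p| ≤ R) (hs : |s| ≤ R) :
    |lowerOrderPart a b c e p s| ≤ K * (6 * R ^ 2 + 3 * R) := by
  have hK : 0 ≤ K := (abs_nonneg a).trans ha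
  have hR : 0 ≤ R := (abs_nonneg p).trans hp
  have hps : |p - s| ≤ 2 * R := (abs_sub p s).trans (by linarith)
  calc |lowerOrderPart a b c e p s|
      ≤ |a| * |p| * |p - s| + |b| * |p - s| ^ 2 + |c| * |p| + |e| * |p - s| :=
        (abs_add_add_sub_sub_le _ _ _ _).trans_eq (by simp only [abs_mul, abs_pow])
    _ ≤ K * R * (2 * R) + K * (2 * R) ^ 2 + K * R + K * (2 * R) := by gcongr
    _ = K * (6 * R ^ 2 + 3 * R) := by ring

lemma sq_lowerOrderPart_sub_le {p' s' : ℝ} (ha : |a| ≤ K) (hb : |b| ≤ K) (hc : |c| ≤ K)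
    (he : |e| ≤ K) (hp : |p| ≤ R) (hs : |s| ≤ R) (hp' : |p'| ≤ R) (hs' : |s'| ≤ R) :
    (lowerOrderPart a b c e p' s' - lowerOrderPart a b c e p s) ^ 2
      ≤ 6 * (K * (5 * R + 1)) ^ 2 * ((p' - p) ^ 2 + (s' - s) ^ 2) := by
  have hK : 0 ≤ K := (abs_nonneg a).trans ha
  have hR : 0 ≤ R := (abs_nonneg p).trans hp
  have hd : |p - s| ≤ 2 * R := (abs_sub p s).trans (by linarith)
  have hd' : |p' - s'| ≤ 2 * R := (abs_sub p' s').trans (by linarith)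
  have hα : |a * (p' - s') - c| ≤ K * (5 * R + 1) :=
    calc |a * (p' - s') - c| ≤ |a| * |p' - s'| + |c| :=
          (abs_sub _ _).trans_eq (by rw [abs_mul])
      _ ≤ K * (2 * R) + K := by gcongr
      _ ≤ K * (5 * R + 1) := by nlinarith
  have hβ : |a * p + b * (p - s + (p' - s')) - e| ≤ K * (5 * R + 1) :=
    calc |a * p + b * (p - s + (p' - s')) - e| ≤ |a * p| + |b * (p - s + (p' - s'))| + |e| :=
          (abs_sub _ _).trans (by gcongr; exact abs_add_le _ _)
      _ ≤ |a| * |p| + |b| * (|p - s| + |p' - s'|) + |e| := by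
          rw [abs_mul, abs_mul]; gcongr; exact abs_add_le _ _
      _ ≤ K * R + K * (2 * R + 2 * R) + K := by gcongr
      _ = K * (5 * R + 1) := by ring
  set u := p' - p
  set w := p' - p - (s' - s)
  have hG : |lowerOrderPart a b c e p' s' - lowerOrderPart a b c e p s|
      ≤ K * (5 * R + 1) * (|u| + |w|) := by
    rw [lowerOrderPart_sub]
    calc _ ≤ |u| * |a * (p' - s') - c| + |w| * |a * p + b * (p - s + (p' - s')) - e| :=
          (abs_add_le _ _).trans_eq (by rw [abs_mul, abs_mul])
      _ ≤ |u| * (K * (5 * R + 1)) + |w| * (K * (5 * R + 1)) := by gcongr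
      _ = K * (5 * R + 1) * (|u| + |w|) := by ring
  have huw : (|u| + |w|) ^ 2 ≤ 6 * (u ^ 2 + (s' - s) ^ 2) := by
    nlinarith [sq_nonneg (|u| - |w|), sq_abs u, sq_abs w, sq_nonneg (u + (s' - s))]
  calc _ = |lowerOrderPart a b c e p' s' - lowerOrderPart a b c e p s| ^ 2 := (sq_abs _).symm
    _ ≤ (K * (5 * R + 1) * (|u| + |w|)) ^ 2 := by gcongr
    _ = (K * (5 * R + 1)) ^ 2 * (|u| + |w|) ^ 2 := by ring
    _ ≤ (K * (5 * R + 1)) ^ 2 * (6 * (u ^ 2 + (s' - s) ^ 2)) := by gcongr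
    _ = _ := by ring

lemma abs_quadraticRemainder_le (ha : |a| ≤ K) (hb : |b| ≤ K) :
    |quadraticRemainder a b u v| ≤ 4 * K * (u ^ 2 + v ^ 2) := by
  have hK : 0 ≤ K := (abs_nonneg a).trans ha
  have huw : |u| * |u - v| + |u - v| ^ 2 ≤ 4 * (u ^ 2 + v ^ 2) := by
    nlinarith [sq_nonneg (|u| - |u - v|), sq_abs u, sq_abs (u - v), sq_nonneg (u + v)]
  calc |quadraticRemainder a b u v| ≤ |a| * |u| * |u - v| + |b| * |u - v| ^ 2 :=
        (abs_add_le _ _).trans_eq (by simp only [abs_mul, abs_pow])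
    _ ≤ K * |u| * |u - v| + K * |u - v| ^ 2 := by gcongr
    _ = K * (|u| * |u - v| + |u - v| ^ 2) := by ring
    _ ≤ K * (4 * (u ^ 2 + v ^ 2)) := by gcongr
    _ = _ := by ring

/-- `(L + D)² - L² - 2 L (D - N) = D² + 2 L N`, and `(x + G)² ≥ x²/2 - G²`. -/
lemma sq_add_sub_sq_sub_two_mul_ge (L x G N : ℝ) :
    x ^ 2 / 2 - G ^ 2 - 2 * |L| * |N| ≤ (L + (x + G)) ^ 2 - L ^ 2 - 2 * L * (x + G - N) := by
  nlinarith [sq_nonneg (x + 2 * G), neg_abs_le (L * N), abs_mul L N]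

end Estimates

noncomputable def coeffBound (ε kmin kmax : ℝ) : ℝ :=
  2 * kmax / ε + 1 / ε ^ 2 + 2 * Real.sqrt kmax + 1 / (ε * Real.sqrt kmin)

lemma abs_coeffs_le {ε kmin kmax k : ℝ} (hε : 0 < ε) (hkmin : 0 < kmin)
    (hk : k ∈ Set.Icc kmin kmax) :
    |2 * k / ε| ≤ coeffBound ε kmin kmax ∧ |1 / ε ^ 2| ≤ coeffBound ε kmin kmax ∧
      |2 * Real.sqrt k| ≤ coeffBound ε kmin kmax ∧
      |1 / (ε * Real.sqrt k)| ≤ coeffBound ε kmin kmax := by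
  obtain ⟨hk₁, hk₂⟩ := hk
  have hk0 : 0 < k := hkmin.trans_le hk₁
  have h₁ : 2 * k / ε ≤ 2 * kmax / ε := by gcongr
  have h₃ : 2 * Real.sqrt k ≤ 2 * Real.sqrt kmax := by gcongr
  have h₄ : 1 / (ε * Real.sqrt k) ≤ 1 / (ε * Real.sqrt kmin) := by gcongr
  have t₁ : 0 ≤ 2 * k / ε := by positivity
  have t₂ : 0 ≤ 1 / ε ^ 2 := by positivity
  have t₃ : 0 ≤ 2 * Real.sqrt k := by positivity
  have t₄ : 0 ≤ 1 / (ε * Real.sqrt k) := by positivity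
  rw [abs_of_nonneg t₁, abs_of_nonneg t₂, abs_of_nonneg t₃, abs_of_nonneg t₄, coeffBound]
  refine ⟨?_, ?_, ?_, ?_⟩ <;> linarith

section Linearization

variable (ε k : ℝ) (q r h₁ h₂ : ℝ → ℝ) (z : ℝ)

lemma L1_eq : L1 ε k q r z = deriv (deriv q) z
    + lowerOrderPart (2 * k / ε) (1 / ε ^ 2) (2 * Real.sqrt k) (1 / (ε * Real.sqrt k))
      (deriv q z) (deriv r z) := by
  unfold L1 lowerOrderPart; ring

lemma L2_eq : L2 ε k q r z = deriv (deriv r) z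
    + lowerOrderPart (2 * k / ε) (1 / ε ^ 2) (2 * Real.sqrt k) (1 / (ε * Real.sqrt k))
      (deriv q z) (deriv r z) := by
  unfold L2 lowerOrderPart; ring

lemma L1lin_eq : L1lin ε k q r h₁ h₂ z = deriv (deriv h₁) z
    + (lowerOrderPart (2 * k / ε) (1 / ε ^ 2) (2 * Real.sqrt k) (1 / (ε * Real.sqrt k))
        (deriv q z + deriv h₁ z) (deriv r z + deriv h₂ z)
      - lowerOrderPart (2 * k / ε) (1 / ε ^ 2) (2 * Real.sqrt k) (1 / (ε * Real.sqrt k))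
        (deriv q z) (deriv r z))
    - quadraticRemainder (2 * k / ε) (1 / ε ^ 2) (deriv h₁ z) (deriv h₂ z) := by
  unfold L1lin lowerOrderPart quadraticRemainder; ring

lemma L2lin_eq : L2lin ε k q r h₁ h₂ z = deriv (deriv h₂) z
    + (lowerOrderPart (2 * k / ε) (1 / ε ^ 2) (2 * Real.sqrt k) (1 / (ε * Real.sqrt k))
        (deriv q z + deriv h₁ z) (deriv r z + deriv h₂ z)
      - lowerOrderPart (2 * k / ε) (1 / ε ^ 2) (2 * Real.sqrt k) (1 / (ε * Real.sqrt k))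
        (deriv q z) (deriv r z))
    - quadraticRemainder (2 * k / ε) (1 / ε ^ 2) (deriv h₁ z) (deriv h₂ z) := by
  unfold L2lin lowerOrderPart quadraticRemainder; ring

end Linearization

@[fun_prop]
lemma ContDiff.continuous_deriv_of_two {f : ℝ → ℝ} (hf : ContDiff ℝ 2 f) : Continuous (deriv f) :=
  hf.continuous_deriv one_le_two

lemma deriv_sub_of_contDiff_two {f g : ℝ → ℝ} (hf : ContDiff ℝ 2 f) (hg : ContDiff ℝ 2 g)
    (z : ℝ) :
    deriv (fun x => f x - g x) z = deriv f z - deriv g z ∧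
      deriv (deriv (fun x => f x - g x)) z = deriv (deriv f) z - deriv (deriv g) z := by
  have h : deriv (fun x => f x - g x) = fun x => deriv f x - deriv g x :=
    funext fun x =>
      deriv_fun_sub (hf.differentiable two_ne_zero x) (hg.differentiable two_ne_zero x)
  exact ⟨congrFun h z, h ▸ deriv_fun_sub (by fun_prop) (by fun_prop)⟩

/-- The coefficient of `h₁'² + h₂'²` in `2 G² + 4 |L| |N|` after the bounds on `G²`, `|L|` and
`|N|` above. -/
noncomputable def defectConst (K R : ℝ) : ℝ :=
  12 * (K * (5 * R + 1)) ^ 2 + 16 * K * (R + K * (6 * R ^ 2 + 3 * R))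

lemma taylorDefect_integrand_ge {ε k kmin kmax R : ℝ} (hε : 0 < ε) (hkmin : 0 < kmin)
    (hk : k ∈ Set.Icc kmin kmax) {q₁ r₁ q₂ r₂ h₁ h₂ : ℝ → ℝ} (hq₁ : ContDiff ℝ 2 q₁)
    (hr₁ : ContDiff ℝ 2 r₁) (hq₂ : ContDiff ℝ 2 q₂) (hr₂ : ContDiff ℝ 2 r₂)
    (hh₁ : h₁ = fun z => q₂ z - q₁ z) (hh₂ : h₂ = fun z => r₂ z - r₁ z) {z : ℝ}
    (hbd : |deriv q₁ z| ≤ R ∧ |deriv (deriv q₁) z| ≤ R ∧ |deriv r₁ z| ≤ R ∧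
      |deriv (deriv r₁) z| ≤ R ∧ |deriv q₂ z| ≤ R ∧ |deriv r₂ z| ≤ R) :
    (deriv (deriv h₁) z ^ 2 + deriv (deriv h₂) z ^ 2) / 2
        - defectConst (coeffBound ε kmin kmax) R * (deriv h₁ z ^ 2 + deriv h₂ z ^ 2)
      ≤ L1 ε k q₂ r₂ z ^ 2 + L2 ε k q₂ r₂ z ^ 2 - (L1 ε k q₁ r₁ z ^ 2 + L2 ε k q₁ r₁ z ^ 2)
        - 2 * (L1 ε k q₁ r₁ z * L1lin ε k q₁ r₁ h₁ h₂ z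
          + L2 ε k q₁ r₁ z * L2lin ε k q₁ r₁ h₁ h₂ z) := by
  subst hh₁ hh₂
  obtain ⟨hp, hx, hs, hy, hp', hs'⟩ := hbd
  obtain ⟨ha, hb, hc, he⟩ := abs_coeffs_le hε hkmin hk
  obtain ⟨hu, hx'⟩ := deriv_sub_of_contDiff_two hq₂ hq₁ z
  obtain ⟨hv, hy'⟩ := deriv_sub_of_contDiff_two hr₂ hr₁ z
  set K := coeffBound ε kmin kmax
  set F := lowerOrderPart (2 * k / ε) (1 / ε ^ 2) (2 * Real.sqrt k) (1 / (ε * Real.sqrt k))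
  set G := F (deriv q₂ z) (deriv r₂ z) - F (deriv q₁ z) (deriv r₁ z)
  set N := quadraticRemainder (2 * k / ε) (1 / ε ^ 2)
    (deriv q₂ z - deriv q₁ z) (deriv r₂ z - deriv r₁ z)
  have e₁ : L1 ε k q₂ r₂ z
      = L1 ε k q₁ r₁ z + (deriv (deriv q₂) z - deriv (deriv q₁) z + G) := by
    rw [L1_eq, L1_eq]; ring
  have e₂ : L2 ε k q₂ r₂ z
      = L2 ε k q₁ r₁ z + (deriv (deriv r₂) z - deriv (deriv r₁) z + G) := by
    rw [L2_eq, L2_eq]; ring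
  rw [e₁, e₂, L1lin_eq, L2lin_eq, hu, hv, hx', hy', add_sub_cancel, add_sub_cancel]
  have hL₁ : |L1 ε k q₁ r₁ z| ≤ R + K * (6 * R ^ 2 + 3 * R) := by
    rw [L1_eq]
    exact (abs_add_le _ _).trans (add_le_add hx (abs_lowerOrderPart_le ha hb hc he hp hs))
  have hL₂ : |L2 ε k q₁ r₁ z| ≤ R + K * (6 * R ^ 2 + 3 * R) := by
    rw [L2_eq]
    exact (abs_add_le _ _).trans (add_le_add hy (abs_lowerOrderPart_le ha hb hc he hp hs))
  have hG := sq_lowerOrderPart_sub_le ha hb hc he hp hs hp' hs'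
  have hN : |N| ≤ 4 * K * ((deriv q₂ z - deriv q₁ z) ^ 2 + (deriv r₂ z - deriv r₁ z) ^ 2) :=
    abs_quadraticRemainder_le ha hb
  have hLN₁ := mul_le_mul hL₁ hN (abs_nonneg _) ((abs_nonneg _).trans hL₁)
  have hLN₂ := mul_le_mul hL₂ hN (abs_nonneg _) ((abs_nonneg _).trans hL₂)
  have t₁ := sq_add_sub_sq_sub_two_mul_ge (L1 ε k q₁ r₁ z)
    (deriv (deriv q₂) z - deriv (deriv q₁) z) G N
  have t₂ := sq_add_sub_sq_sub_two_mul_ge (L2 ε k q₁ r₁ z)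
    (deriv (deriv r₂) z - deriv (deriv r₁) z) G N
  unfold defectConst
  linarith

lemma taylorDefect_ge_integral {ε k kmin kmax R lam Z : ℝ} (hZ : 0 ≤ Z) (hε : 0 < ε)
    (hkmin : 0 < kmin) (hk : k ∈ Set.Icc kmin kmax) {q₁ r₁ q₂ r₂ h₁ h₂ : ℝ → ℝ}
    (hq₁ : ContDiff ℝ 2 q₁) (hr₁ : ContDiff ℝ 2 r₁) (hq₂ : ContDiff ℝ 2 q₂)
    (hr₂ : ContDiff ℝ 2 r₂) (hh₁ : h₁ = fun z => q₂ z - q₁ z)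
    (hh₂ : h₂ = fun z => r₂ z - r₁ z)
    (hbd : ∀ z ∈ Set.Icc 0 Z, |deriv q₁ z| ≤ R ∧ |deriv (deriv q₁) z| ≤ R ∧
      |deriv r₁ z| ≤ R ∧ |deriv (deriv r₁) z| ≤ R ∧ |deriv q₂ z| ≤ R ∧ |deriv r₂ z| ≤ R) :
    ∫ z in (0:ℝ)..Z, ((deriv (deriv h₁) z ^ 2 + deriv (deriv h₂) z ^ 2) / 2
        - defectConst (coeffBound ε kmin kmax) R * (deriv h₁ z ^ 2 + deriv h₂ z ^ 2))
        * Real.exp (-2 * lam * z)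
      ≤ Jfun ε k lam Z q₂ r₂ - Jfun ε k lam Z q₁ r₁
        - 2 * ∫ z in (0:ℝ)..Z,
            (L1 ε k q₁ r₁ z * L1lin ε k q₁ r₁ h₁ h₂ z
              + L2 ε k q₁ r₁ z * L2lin ε k q₁ r₁ h₁ h₂ z) * Real.exp (-2 * lam * z) := by
  have hh₁c : ContDiff ℝ 2 h₁ := hh₁ ▸ hq₂.sub hq₁
  have hh₂c : ContDiff ℝ 2 h₂ := hh₂ ▸ hr₂.sub hr₁
  simp only [Jfun]
  rw [← intervalIntegral.integral_const_mul, ← intervalIntegral.integral_sub,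
    ← intervalIntegral.integral_sub]
  · refine intervalIntegral.integral_mono_on hZ ?_ ?_ fun z hz => ?_
    · exact (by fun_prop : Continuous _).intervalIntegrable _ _
    · exact Continuous.intervalIntegrable (by simp only [L1, L2, L1lin, L2lin]; fun_prop) _ _
    have := mul_le_mul_of_nonneg_right
      (taylorDefect_integrand_ge hε hkmin hk hq₁ hr₁ hq₂ hr₂ hh₁ hh₂ (hbd z hz))
      (Real.exp_pos (-2 * lam * z)).le
    linarith
  all_goals
    exact Continuous.intervalIntegrable (by simp only [L1, L2, L1lin, L2lin]; fun_prop) _ _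

noncomputable def weightedSqIntegral (lam Z : ℝ) (f : ℝ → ℝ) : ℝ :=
  ∫ z in (0:ℝ)..Z, f z ^ 2 * Real.exp (-2 * lam * z)

section Carleman

variable {lam Z : ℝ}

lemma weightedSqIntegral_nonneg (hZ : 0 ≤ Z) (f : ℝ → ℝ) : 0 ≤ weightedSqIntegral lam Z f :=
  intervalIntegral.integral_nonneg hZ fun _ _ => by positivity

/-- Weighted Poincaré inequality: the boundary term of `(f² e^{-2λz})'` has a sign, and
`2 f f' ≤ λ f² + f'²/λ`. -/
theorem sq_mul_weightedSqIntegral_le {f : ℝ → ℝ} (hf : ContDiff ℝ 1 f) (hf0 : f 0 = 0)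
    (hZ : 0 ≤ Z) (hlam : 0 < lam) :
    lam ^ 2 * weightedSqIntegral lam Z f ≤ weightedSqIntegral lam Z (deriv f) := by
  have hfd : Differentiable ℝ f := hf.differentiable one_ne_zero
  have hf' : Continuous (deriv f) := hf.continuous_deriv le_rfl
  have hfc : Continuous f := hfd.continuous
  have hftc : ∫ z in (0:ℝ)..Z, (2 * f z * deriv f z - 2 * lam * f z ^ 2) * Real.exp (-2 * lam * z)
      = f Z ^ 2 * Real.exp (-2 * lam * Z) := by
    rw [intervalIntegral.integral_eq_sub_of_hasDerivAt
      (f := fun z => f z ^ 2 * Real.exp (-2 * lam * z))]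
    · simp [hf0]
    · intro z _
      refine (((hfd z).hasDerivAt.fun_pow 2).fun_mul
        ((hasDerivAt_id' z).const_mul (-2 * lam)).exp).congr_deriv ?_
      push_cast
      ring
    · exact (by fun_prop : Continuous _).intervalIntegrable _ _
  have hamgm : ∫ z in (0:ℝ)..Z, (2 * f z * deriv f z - 2 * lam * f z ^ 2) * Real.exp (-2 * lam * z)
      ≤ ∫ z in (0:ℝ)..Z, (deriv f z ^ 2 - lam ^ 2 * f z ^ 2) / lam * Real.exp (-2 * lam * z) := by
    refine intervalIntegral.integral_mono_on hZ
      ((by fun_prop : Continuous _).intervalIntegrable _ _)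
      ((by fun_prop : Continuous _).intervalIntegrable _ _) fun z _ => ?_
    gcongr
    rw [le_div_iff₀ hlam]
    nlinarith [sq_nonneg (lam * f z - deriv f z)]
  have hsplit : ∫ z in (0:ℝ)..Z, (deriv f z ^ 2 - lam ^ 2 * f z ^ 2) / lam * Real.exp (-2 * lam * z)
      = (weightedSqIntegral lam Z (deriv f) - lam ^ 2 * weightedSqIntegral lam Z f) / lam := by
    simp only [weightedSqIntegral, div_mul_eq_mul_div, sub_mul, mul_assoc]
    rw [intervalIntegral.integral_div, intervalIntegral.integral_sub,
      intervalIntegral.integral_const_mul]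
    all_goals exact (by fun_prop : Continuous _).intervalIntegrable _ _
  have hpos :
      0 ≤ (weightedSqIntegral lam Z (deriv f) - lam ^ 2 * weightedSqIntegral lam Z f) / lam :=
    calc (0:ℝ) ≤ f Z ^ 2 * Real.exp (-2 * lam * Z) := by positivity
      _ ≤ _ := hftc ▸ hamgm
      _ = _ := hsplit
  linarith [(le_div_iff₀ hlam).mp hpos]

lemma weightedSqIntegral_le_deriv {f : ℝ → ℝ} (hf : ContDiff ℝ 1 f) (hf0 : f 0 = 0)
    (hZ : 0 ≤ Z) (hlam : 1 ≤ lam) :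
    weightedSqIntegral lam Z f ≤ weightedSqIntegral lam Z (deriv f) :=
  (le_mul_of_one_le_left (weightedSqIntegral_nonneg hZ f) (one_le_pow₀ hlam)).trans
    (sq_mul_weightedSqIntegral_le hf hf0 hZ (by linarith))

lemma exp_mul_integral_le {S : ℝ → ℝ} (hS : Continuous S) (hS0 : ∀ z, 0 ≤ S z)
    (hZ : 0 ≤ Z) (hlam : 0 ≤ lam) :
    Real.exp (-2 * lam * Z) * ∫ z in (0:ℝ)..Z, S z
      ≤ ∫ z in (0:ℝ)..Z, S z * Real.exp (-2 * lam * z) := by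
  rw [← intervalIntegral.integral_const_mul]
  refine intervalIntegral.integral_mono_on hZ
    ((by fun_prop : Continuous _).intervalIntegrable _ _)
    ((by fun_prop : Continuous _).intervalIntegrable _ _) fun z hz => ?_
  rw [mul_comm]
  exact mul_le_mul_of_nonneg_left (Real.exp_le_exp.mpr (by nlinarith [hz.2])) (hS0 z)

lemma carleman_absorb {A : ℝ} (hZ : 0 ≤ Z) (hlam : 1 ≤ lam) (hA : 4 * A ≤ lam ^ 2)
    {h₁ h₂ : ℝ → ℝ} (hh₁ : ContDiff ℝ 2 h₁) (hh₂ : ContDiff ℝ 2 h₂) (h₁0 : h₁ 0 = 0)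
    (h₁'0 : deriv h₁ 0 = 0) (h₂0 : h₂ 0 = 0) (h₂'0 : deriv h₂ 0 = 0) :
    1 / 12 * Real.exp (-2 * lam * Z) *
        ∫ z in (0:ℝ)..Z,
          ((h₁ z) ^ 2 + (deriv h₁ z) ^ 2 + (deriv (deriv h₁) z) ^ 2
            + (h₂ z) ^ 2 + (deriv h₂ z) ^ 2 + (deriv (deriv h₂) z) ^ 2)
      ≤ ∫ z in (0:ℝ)..Z, ((deriv (deriv h₁) z ^ 2 + deriv (deriv h₂) z ^ 2) / 2
          - A * (deriv h₁ z ^ 2 + deriv h₂ z ^ 2)) * Real.exp (-2 * lam * z) := by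
  set W := weightedSqIntegral lam Z
  have hlam0 : 0 < lam := one_pos.trans_le hlam
  have P₁ := sq_mul_weightedSqIntegral_le hh₁.deriv' h₁'0 hZ hlam0
  have P₂ := sq_mul_weightedSqIntegral_le hh₂.deriv' h₂'0 hZ hlam0
  have Q₁ := weightedSqIntegral_le_deriv (hh₁.of_le one_le_two) h₁0 hZ hlam
  have Q₂ := weightedSqIntegral_le_deriv (hh₂.of_le one_le_two) h₂0 hZ hlam
  have Q₁' := weightedSqIntegral_le_deriv hh₁.deriv' h₁'0 hZ hlam
  have Q₂' := weightedSqIntegral_le_deriv hh₂.deriv' h₂'0 hZ hlam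
  have R₁ := mul_le_mul_of_nonneg_right hA (weightedSqIntegral_nonneg hZ (deriv h₁) (lam := lam))
  have R₂ := mul_le_mul_of_nonneg_right hA (weightedSqIntegral_nonneg hZ (deriv h₂) (lam := lam))
  have hupper := exp_mul_integral_le (by fun_prop) (fun z => by positivity) hZ hlam0.le
    (S := fun z => (h₁ z) ^ 2 + (deriv h₁ z) ^ 2 + (deriv (deriv h₁) z) ^ 2
            + (h₂ z) ^ 2 + (deriv h₂ z) ^ 2 + (deriv (deriv h₂) z) ^ 2)
  have hsum : ∫ z in (0:ℝ)..Z, ((h₁ z) ^ 2 + (deriv h₁ z) ^ 2 + (deriv (deriv h₁) z) ^ 2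
            + (h₂ z) ^ 2 + (deriv h₂ z) ^ 2 + (deriv (deriv h₂) z) ^ 2) * Real.exp (-2 * lam * z)
      = W h₁ + W (deriv h₁) + W (deriv (deriv h₁))
        + W h₂ + W (deriv h₂) + W (deriv (deriv h₂)) := by
    simp only [W, weightedSqIntegral, add_mul]
    rw [intervalIntegral.integral_add, intervalIntegral.integral_add, intervalIntegral.integral_add,
      intervalIntegral.integral_add, intervalIntegral.integral_add]
    all_goals exact (by fun_prop : Continuous _).intervalIntegrable _ _
  have hlower : ∫ z in (0:ℝ)..Z, ((deriv (deriv h₁) z ^ 2 + deriv (deriv h₂) z ^ 2) / 2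
          - A * (deriv h₁ z ^ 2 + deriv h₂ z ^ 2)) * Real.exp (-2 * lam * z)
      = (W (deriv (deriv h₁)) + W (deriv (deriv h₂))) / 2 - A * (W (deriv h₁) + W (deriv h₂)) := by
    simp only [W, weightedSqIntegral, sub_mul, div_mul_eq_mul_div, add_mul, mul_assoc]
    rw [intervalIntegral.integral_sub, intervalIntegral.integral_div, intervalIntegral.integral_add,
      intervalIntegral.integral_const_mul, intervalIntegral.integral_add]
    all_goals exact (by fun_prop : Continuous _).intervalIntegrable _ _
  rw [hsum] at hupper
  rw [hlower]
  linarith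

end Carleman

theorem strong_convexity_of_J_general (Z R ε kmin kmax : ℝ) (hZ : 0 < Z)
    (hε : ε ∈ Set.Ioo (0:ℝ) 1) (hkmin : 0 < kmin) :
    ∃ lam₁ C₁ : ℝ, 1 ≤ lam₁ ∧ 0 < C₁ ∧
      ∀ lam : ℝ, lam₁ ≤ lam → ∀ k ∈ Set.Icc kmin kmax,
      ∀ q₁ r₁ q₂ r₂ : ℝ → ℝ,
      ContDiff ℝ 2 q₁ → ContDiff ℝ 2 r₁ → ContDiff ℝ 2 q₂ → ContDiff ℝ 2 r₂ →
      (∀ z ∈ Set.Icc (0:ℝ) Z,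
        |q₁ z| ≤ R ∧ |deriv q₁ z| ≤ R ∧ |deriv (deriv q₁) z| ≤ R ∧
        |r₁ z| ≤ R ∧ |deriv r₁ z| ≤ R ∧ |deriv (deriv r₁) z| ≤ R ∧
        |q₂ z| ≤ R ∧ |deriv q₂ z| ≤ R ∧ |deriv (deriv q₂) z| ≤ R ∧
        |r₂ z| ≤ R ∧ |deriv r₂ z| ≤ R ∧ |deriv (deriv r₂) z| ≤ R) →
      ∀ h₁ h₂ : ℝ → ℝ,
      h₁ = (fun z => q₂ z - q₁ z) → h₂ = (fun z => r₂ z - r₁ z) →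
      h₁ 0 = 0 → deriv h₁ 0 = 0 → h₂ 0 = 0 → deriv h₂ 0 = 0 →
      Jfun ε k lam Z q₂ r₂ - Jfun ε k lam Z q₁ r₁
        - 2 * ∫ z in (0:ℝ)..Z,
            (L1 ε k q₁ r₁ z * L1lin ε k q₁ r₁ h₁ h₂ z
              + L2 ε k q₁ r₁ z * L2lin ε k q₁ r₁ h₁ h₂ z) * Real.exp (-2 * lam * z)
      ≥ C₁ * Real.exp (-2 * lam * Z) *
          ∫ z in (0:ℝ)..Z,
            ((h₁ z) ^ 2 + (deriv h₁ z) ^ 2 + (deriv (deriv h₁) z) ^ 2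
              + (h₂ z) ^ 2 + (deriv h₂ z) ^ 2 + (deriv (deriv h₂) z) ^ 2) := by
  set A := defectConst (coeffBound ε kmin kmax) R
  refine ⟨max 1 (4 * A), 1 / 12, le_max_left _ _, by norm_num, ?_⟩
  intro lam hlam k hk q₁ r₁ q₂ r₂ hq₁ hr₁ hq₂ hr₂ hbd h₁ h₂ hh₁ hh₂ h₁0 h₁'0 h₂0 h₂'0
  have hlam₁ : 1 ≤ lam := (le_max_left _ _).trans hlam
  have hA : 4 * A ≤ lam ^ 2 :=
    calc 4 * A ≤ lam := (le_max_right _ _).trans hlam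
      _ ≤ lam ^ 2 := by nlinarith
  have hbd' : ∀ z ∈ Set.Icc 0 Z, |deriv q₁ z| ≤ R ∧ |deriv (deriv q₁) z| ≤ R ∧
      |deriv r₁ z| ≤ R ∧ |deriv (deriv r₁) z| ≤ R ∧ |deriv q₂ z| ≤ R ∧ |deriv r₂ z| ≤ R :=
    fun z hz => by
      obtain ⟨-, hq₁', hq₁'', -, hr₁', hr₁'', -, hq₂', -, -, hr₂', -⟩ := hbd z hz
      exact ⟨hq₁', hq₁'', hr₁', hr₁'', hq₂', hr₂'⟩
  exact (carleman_absorb hZ.le hlam₁ hA (hh₁ ▸ hq₂.sub hq₁) (hh₂ ▸ hr₂.sub hr₁)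
    h₁0 h₁'0 h₂0 h₂'0).trans
    (taylorDefect_ge_integral hZ.le hε.1 hkmin hk hq₁ hr₁ hq₂ hr₂ hh₁ hh₂ hbd')

/-- Global strong convexity of the convexified functional `J_λ` (item 2 of Theorem 5.1). -/
theorem strong_convexity_of_J (Z R ε kmin kmax : ℝ) (hZ : 0 < Z) (hR : 0 < R)
    (hε : ε ∈ Set.Ioo (0:ℝ) 1) (hkmin : 0 < kmin) (hkk : kmin ≤ kmax) :
    ∃ lam₁ C₁ : ℝ, 1 ≤ lam₁ ∧ 0 < C₁ ∧
      ∀ lam : ℝ, lam₁ ≤ lam → ∀ k ∈ Set.Icc kmin kmax,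
      ∀ q₁ r₁ q₂ r₂ : ℝ → ℝ,
      ContDiff ℝ 2 q₁ → ContDiff ℝ 2 r₁ → ContDiff ℝ 2 q₂ → ContDiff ℝ 2 r₂ →
      (∀ z ∈ Set.Icc (0:ℝ) Z,
        |q₁ z| ≤ R ∧ |deriv q₁ z| ≤ R ∧ |deriv (deriv q₁) z| ≤ R ∧
        |r₁ z| ≤ R ∧ |deriv r₁ z| ≤ R ∧ |deriv (deriv r₁) z| ≤ R ∧
        |q₂ z| ≤ R ∧ |deriv q₂ z| ≤ R ∧ |deriv (deriv q₂) z| ≤ R ∧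
        |r₂ z| ≤ R ∧ |deriv r₂ z| ≤ R ∧ |deriv (deriv r₂) z| ≤ R) →
      ∀ h₁ h₂ : ℝ → ℝ,
      h₁ = (fun z => q₂ z - q₁ z) → h₂ = (fun z => r₂ z - r₁ z) →
      h₁ 0 = 0 → deriv h₁ 0 = 0 → h₂ 0 = 0 → deriv h₂ 0 = 0 →
      Jfun ε k lam Z q₂ r₂ - Jfun ε k lam Z q₁ r₁
        - 2 * ∫ z in (0:ℝ)..Z,
            (L1 ε k q₁ r₁ z * L1lin ε k q₁ r₁ h₁ h₂ z
              + L2 ε k q₁ r₁ z * L2lin ε k q₁ r₁ h₁ h₂ z) * Real.exp (-2 * lam * z)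
      ≥ C₁ * Real.exp (-2 * lam * Z) *
          ∫ z in (0:ℝ)..Z,
            ((h₁ z) ^ 2 + (deriv h₁ z) ^ 2 + (deriv (deriv h₁) z) ^ 2
              + (h₂ z) ^ 2 + (deriv h₂ z) ^ 2 + (deriv (deriv h₂) z) ^ 2) :=
  strong_convexity_of_J_general Z R ε kmin kmax hZ hε hkmin
end

section
/- Let H be a real Hilbert space and R > 0, and let B(ρ) = {x ∈ H : ‖x‖ ≤ ρ}. Let F : H → ℝ be Fréchet differentiable on an open set containing B(R), with gradient ∇F Lipschitz continuous on B(R) with some constant D > 0, and strongly convex on B(R) with constant κ > 0, i.e. F(y) − F(x) − ⟨∇F(x), y − x⟩ ≥ κ‖y − x‖² for all x, y ∈ B(R). Assume the unique minimizer x_m of F on B(R) satisfies ‖x_m‖ < R/3, and let x₀ ∈ H with ‖x₀‖ < R/3. Then there exist a sufficiently small step size γ ∈ (0,1) and a number θ = θ(γ) ∈ (0,1) such that the gradient descent iterates x_n = x_{n−1} − γ ∇F(x_{n−1}), n = 1, 2, …, all belong to B(R) and satisfy ‖x_n − x_m‖ ≤ θⁿ ‖x₀ − x_m‖ for every n ≥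 1. -/
/-!
Adding the strong convexity inequalities at `(x, x_m)` and `(x_m, x)`, and using `∇F(x_m) = 0`
(`x_m` is an interior minimum), gives `⟪∇F x, x - x_m⟫ ≥ 2κ‖x - x_m‖²`. Together with
`‖∇F x‖ ≤ D‖x - x_m‖` this makes a gradient step with `γD² ≤ κ` a contraction towards `x_m` by the
factor `√(1 - 3γκ)`. Since `‖x₀‖, ‖x_m‖ < R/3`, the ball around `x_m` through `x₀` lies in `B(R)`,
so the iterates never leave the region where the hypotheses hold.
-/

open InnerProductSpace Metric Set Filter Topology

/-- No differentiability is needed: `fderiv` is `0` where `F` is not differentiable. -/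
theorem IsLocalMin.gradient_eq_zero {H : Type*} [NormedAddCommGroup H] [InnerProductSpace ℝ H]
    [CompleteSpace H] {F : H → ℝ} {a : H} (h : IsLocalMin F a) : gradient F a = 0 := by
  simp [gradient, h.fderiv_eq_zero]

section InnerProductSpace

variable {H : Type*} [NormedAddCommGroup H] [InnerProductSpace ℝ H]

theorem two_mul_norm_sub_sq_le_inner_sub {s : Set H} {F : H → ℝ} {g : H → H} {κ : ℝ}
    (hF : ∀ x ∈ s, ∀ y ∈ s, F y - F x - ⟪g x, y - x⟫_ℝ ≥ κ * ‖y - x‖ ^ 2)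
    {x y : H} (hx : x ∈ s) (hy : y ∈ s) :
    2 * κ * ‖x - y‖ ^ 2 ≤ ⟪g x - g y, x - y⟫_ℝ := by
  have hxy := hF x hx y hy
  have hyx := hF y hy x hx
  rw [← neg_sub x y, inner_neg_right, norm_neg] at hxy
  rw [inner_sub_left]
  linarith

theorem norm_sub_smul_le_sqrt_mul {v w : H} {γ κ D : ℝ} (hγ : 0 ≤ γ) (hγD : γ * D ^ 2 ≤ κ)
    (hinner : 2 * κ * ‖v‖ ^ 2 ≤ ⟪w, v⟫_ℝ) (hw : ‖w‖ ≤ D * ‖v‖) :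
    ‖v - γ • w‖ ≤ √(1 - 3 * γ * κ) * ‖v‖ := by
  have hw_sq : ‖w‖ ^ 2 ≤ D ^ 2 * ‖v‖ ^ 2 := by
    rw [← mul_pow]; exact pow_le_pow_left₀ (norm_nonneg w) hw 2
  have hsq : ‖v - γ • w‖ ^ 2 ≤ (1 - 3 * γ * κ) * ‖v‖ ^ 2 := calc
    ‖v - γ • w‖ ^ 2 = ‖v‖ ^ 2 - 2 * γ * ⟪w, v⟫_ℝ + γ ^ 2 * ‖w‖ ^ 2 := by
      rw [norm_sub_sq_real, inner_smul_right, real_inner_comm, norm_smul, mul_pow,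
        Real.norm_eq_abs, sq_abs]
      ring
    _ ≤ ‖v‖ ^ 2 - 2 * γ * (2 * κ * ‖v‖ ^ 2) + γ ^ 2 * (D ^ 2 * ‖v‖ ^ 2) := by gcongr
    _ ≤ (1 - 3 * γ * κ) * ‖v‖ ^ 2 := by
      have := mul_le_mul_of_nonneg_right (mul_le_mul_of_nonneg_left hγD hγ) (sq_nonneg ‖v‖)
      linarith
  calc ‖v - γ • w‖ = √(‖v - γ • w‖ ^ 2) := (Real.sqrt_sq (norm_nonneg _)).symm
    _ ≤ √((1 - 3 * γ * κ) * ‖v‖ ^ 2) := Real.sqrt_le_sqrt hsq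
    _ = √(1 - 3 * γ * κ) * ‖v‖ := by
      rw [Real.sqrt_mul' _ (sq_nonneg _), Real.sqrt_sq (norm_nonneg _)]

end InnerProductSpace

theorem dist_le_pow_mul_of_dist_le_mul_on_closedBall {X : Type*} [PseudoMetricSpace X] {T : X → X}
    {p : X} {θ : ℝ} (hθ₀ : 0 ≤ θ) (hθ₁ : θ ≤ 1)
    {x : ℕ → X} (hT : ∀ z ∈ closedBall p (dist (x 0) p), dist (T z) p ≤ θ * dist z p)
    (hx : ∀ n, x (n + 1) = T (x n)) (n : ℕ) :
    dist (x n) p ≤ θ ^ n * dist (x 0) p := by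
  induction n with
  | zero => simp
  | succ n ih =>
    have hmem : x n ∈ closedBall p (dist (x 0) p) :=
      ih.trans (mul_le_of_le_one_left dist_nonneg (pow_le_one₀ hθ₀ hθ₁))
    calc dist (x (n + 1)) p ≤ θ * dist (x n) p := hx n ▸ hT _ hmem
      _ ≤ θ * (θ ^ n * dist (x 0) p) := by gcongr
      _ = θ ^ (n + 1) * dist (x 0) p := by ring

theorem exists_step_size {κ : ℝ} (hκ : 0 < κ) (D : ℝ) :
    ∃ γ ∈ Ioo (0 : ℝ) 1, γ * D ^ 2 ≤ κ ∧ 3 * γ * κ < 1 := by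
  -- all three conditions hold strictly at `γ = 0` and are open
  have h : ∀ᶠ γ in 𝓝 (0 : ℝ), γ < 1 ∧ γ * D ^ 2 < κ ∧ 3 * γ * κ < 1 := by
    refine (eventually_lt_nhds one_pos).and (.and ?_ ?_)
    · exact (continuous_mul_const _).continuousAt.eventually_lt continuousAt_const (by simpa)
    · exact (continuous_const_mul _ |>.mul continuous_const).continuousAt.eventually_lt
        continuousAt_const (by simp)
  obtain ⟨γ, ⟨hγ₁, hγD, hγκ⟩, hγ₀⟩ :=
    ((h.filter_mono nhdsWithin_le_nhds).and (self_mem_nhdsWithin (s := Ioi 0))).exists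
  exact ⟨γ, ⟨hγ₀, hγ₁⟩, hγD.le, hγκ⟩

theorem gradient_descent_global_convergence_general
    {H : Type*} [NormedAddCommGroup H] [InnerProductSpace ℝ H] [CompleteSpace H]
    (R : ℝ)
    (F : H → ℝ)
    (D : ℝ)
    (hlip : ∀ x ∈ Metric.closedBall (0 : H) R, ∀ y ∈ Metric.closedBall (0 : H) R,
      ‖gradient F x - gradient F y‖ ≤ D * ‖x - y‖)
    (κ : ℝ) (hκ : 0 < κ)
    (hsconv : ∀ x ∈ Metric.closedBall (0 : H) R, ∀ y ∈ Metric.closedBall (0 : H) R,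
      F y - F x - ⟪gradient F x, y - x⟫_ℝ ≥ κ * ‖y - x‖ ^ 2)
    (xm : H) (hxm_mem : xm ∈ Metric.closedBall (0 : H) R)
    (hxm_min : ∀ y ∈ Metric.closedBall (0 : H) R, F xm ≤ F y)
    (hxm_small : ‖xm‖ < R / 3)
    (x₀ : H) (hx₀ : ‖x₀‖ < R / 3) :
    ∃ γ ∈ Set.Ioo (0:ℝ) 1, ∃ θ ∈ Set.Ioo (0:ℝ) 1,
      ∀ x : ℕ → H, x 0 = x₀ →
        (∀ n : ℕ, x (n + 1) = x n - γ • gradient F (x n)) →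
        ∀ n : ℕ, 1 ≤ n →
          x n ∈ Metric.closedBall (0 : H) R ∧ ‖x n - xm‖ ≤ θ ^ n * ‖x₀ - xm‖ := by
  have hxm_ball : xm ∈ ball (0 : H) R := by rw [mem_ball_zero_iff]; linarith [norm_nonneg xm]
  have hgrad_xm : gradient F xm = 0 :=
    ((isMinOn_iff.2 hxm_min).isLocalMin (closedBall_mem_nhds_of_mem hxm_ball)).gradient_eq_zero
  obtain ⟨γ, hγ, hγD, hγκ⟩ := exists_step_size hκ D
  have hθ : √(1 - 3 * γ * κ) ∈ Ioo (0 : ℝ) 1 :=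
    ⟨Real.sqrt_pos.2 (by linarith), (Real.sqrt_lt' one_pos).2 (by nlinarith [hγ.1])⟩
  have hball : closedBall xm (dist x₀ xm) ⊆ closedBall (0 : H) R := by
    refine closedBall_subset_closedBall' ?_
    rw [dist_eq_norm, dist_zero_right]
    linarith [norm_sub_le x₀ xm]
  have hstep : ∀ z ∈ closedBall xm (dist x₀ xm),
      dist (z - γ • gradient F z) xm ≤ √(1 - 3 * γ * κ) * dist z xm := by
    intro z hz
    have hzR := hball hz
    have := norm_sub_smul_le_sqrt_mul hγ.1.le hγD
      (two_mul_norm_sub_sq_le_inner_sub hsconv hzR hxm_mem)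
      (hlip z hzR xm hxm_mem)
    simpa [dist_eq_norm, hgrad_xm, sub_right_comm] using this
  refine ⟨γ, hγ, _, hθ, fun x hx₀ hx n _ => ?_⟩
  have hrate := dist_le_pow_mul_of_dist_le_mul_on_closedBall hθ.1.le hθ.2.le (hx₀ ▸ hstep) hx n
  rw [hx₀] at hrate
  have hθn : √(1 - 3 * γ * κ) ^ n ≤ 1 := pow_le_one₀ hθ.1.le hθ.2.le
  refine ⟨hball (mem_closedBall.2 (hrate.trans (mul_le_of_le_one_left dist_nonneg hθn))), ?_⟩
  simpa only [dist_eq_norm] using hrate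

/-- Abstract global convergence of the gradient descent method underlying Theorem 5.3:
for a functional `F` with Lipschitz continuous gradient, strongly convex on the ball
`B(R)` of a real Hilbert space, whose minimizer `x_m` on `B(R)` satisfies `‖x_m‖ < R/3`,
and any starting point `x₀` with `‖x₀‖ < R/3`, there exist a small step size
`γ ∈ (0,1)` and `θ = θ(γ) ∈ (0,1)` such that the iterates
`x_n = x_{n−1} − γ ∇F(x_{n−1})` stay in `B(R)` and converge to `x_m` at the rate `θⁿ`. -/
theorem gradient_descent_global_convergence
    {H : Type*} [NormedAddCommGroup H] [InnerProductSpace ℝ H] [CompleteSpace H]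
    (R : ℝ) (hR : 0 < R)
    (F : H → ℝ) (U : Set H) (hU : IsOpen U)
    (hKU : Metric.closedBall (0 : H) R ⊆ U)
    (hdiff : ∀ x ∈ U, HasGradientAt F (gradient F x) x)
    (D : ℝ) (hD : 0 < D)
    (hlip : ∀ x ∈ Metric.closedBall (0 : H) R, ∀ y ∈ Metric.closedBall (0 : H) R,
      ‖gradient F x - gradient F y‖ ≤ D * ‖x - y‖)
    (κ : ℝ) (hκ : 0 < κ)
    (hsconv : ∀ x ∈ Metric.closedBall (0 : H) R, ∀ y ∈ Metric.closedBall (0 : H) R,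
      F y - F x - ⟪gradient F x, y - x⟫_ℝ ≥ κ * ‖y - x‖ ^ 2)
    (xm : H) (hxm_mem : xm ∈ Metric.closedBall (0 : H) R)
    (hxm_min : ∀ y ∈ Metric.closedBall (0 : H) R, F xm ≤ F y)
    (hxm_unique : ∀ x' ∈ Metric.closedBall (0 : H) R,
      (∀ y ∈ Metric.closedBall (0 : H) R, F x' ≤ F y) → x' = xm)
    (hxm_small : ‖xm‖ < R / 3)
    (x₀ : H) (hx₀ : ‖x₀‖ < R / 3) :
    ∃ γ ∈ Set.Ioo (0:ℝ) 1, ∃ θ ∈ Set.Ioo (0:ℝ) 1,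
      ∀ x : ℕ → H, x 0 = x₀ →
        (∀ n : ℕ, x (n + 1) = x n - γ • gradient F (x n)) →
        ∀ n : ℕ, 1 ≤ n →
          x n ∈ Metric.closedBall (0 : H) R ∧ ‖x n - xm‖ ≤ θ ^ n * ‖x₀ - xm‖ :=
  gradient_descent_global_convergence_general R F D hlip κ hκ hsconv xm hxm_mem hxm_min hxm_small x₀
    hx₀
end

section
/- For all Z > 0, ε ∈ (0,1), 0 < k_min ≤ k_max and C > 0 there exists C₁ > 0, depending only on Z, ε, k_min, k_max and C, with the following property. Let k ∈ [k_min, k_max] and let q₁, r₁, q₂, r₂ : [0,Z] → ℝ be twice continuously differentiable with |q₁'(z)|, |r₁'(z)|, |q₂'(z)|, |r₂'(z)| ≤ C and |q₁''(z)| ≤ C for all z ∈ [0,Z]. Set h₁ = q₂ − q₁ and h₂ = r₂ − r₁. Then for every z ∈ [0,Z]: L₁(q₂,r₂)(z)² − L₁(q₁,r₁)(z)² − 2·L₁(q₁,r₁)(z)·L₁,lin(h₁,h₂)(z) ≥ (1/2)·h₁''(z)² − C₁·( h₁'(z)² + h₂'(z)² ), where the linearization L₁,lin is taken at the base point (q₁,r₁).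 -/
set_option maxHeartbeats 1000000


/-- auxiliary constant: bound for `|L₁(q₁,r₁)|`. -/
noncomputable def KAc (ε C kmax smin smax : ℝ) : ℝ :=
  C + (2 * kmax / ε * C) * (2 * C) + (1 / ε ^ 2) * (2 * C) ^ 2 + (2 * smax) * C
    + (2 * C) / (ε * smin)

/-- auxiliary constant: bound for the quadratic remainder. -/
noncomputable def KQc (ε kmax : ℝ) : ℝ := 3 * kmax / ε + 2 / ε ^ 2

/-- auxiliary constant. -/
noncomputable def T0c (ε C kmax smax : ℝ) : ℝ := (2 * kmax / ε) * (2 * C) + 2 * smax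

/-- auxiliary constant. -/
noncomputable def R0c (ε C kmax smin : ℝ) : ℝ :=
  (2 * kmax / ε) * C + (2 / ε ^ 2) * (2 * C) + 1 / (ε * smin) + (2 * kmax / ε) * (2 * C)
    + (1 / ε ^ 2) * (4 * C)

/-- the final constant `C₁`. -/
noncomputable def Kone (ε C kmax smin smax : ℝ) : ℝ :=
  2 * (T0c ε C kmax smax + R0c ε C kmax smin) ^ 2
    + 2 * (KAc ε C kmax smin smax * KQc ε kmax) + 1

private lemma abs_mul_le' {x y X Y : ℝ} (hx : |x| ≤ X) (hy : |y| ≤ Y) : |x * y| ≤ X * Y := by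
  rw [abs_mul]
  exact mul_le_mul hx hy (abs_nonneg _) ((abs_nonneg x).trans hx)

private lemma alg {X P A Q S KA KQ M2 : ℝ} (hS : 0 ≤ S) (hKA : 0 ≤ KA) (hKQ : 0 ≤ KQ)
    (hA : |A| ≤ KA) (hQ : |Q| ≤ KQ * S) (hP : P ^ 2 ≤ M2 * S) :
    (X + P) ^ 2 + 2 * A * Q ≥ (1 / 2) * X ^ 2 - (M2 + 2 * (KA * KQ) + 1) * S := by
  have h1 : |A * Q| ≤ KA * (KQ * S) := by
    rw [abs_mul]
    exact mul_le_mul hA hQ (abs_nonneg _) hKA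
  have h2 := abs_le.mp h1
  nlinarith [sq_nonneg (X + 2 * P), h2.1, hP, hS]

private lemma master (ε s k C kmax smin smax a1 b1 a2 b2 y1 y2 : ℝ)
    (hε : 0 < ε) (hsm : 0 < smin) (hs1 : smin ≤ s) (hs2 : s ≤ smax)
    (hk0 : 0 ≤ k) (hkM : k ≤ kmax) (hC : 0 < C)
    (ha1 : |a1| ≤ C) (hb1 : |b1| ≤ C) (ha2 : |a2| ≤ C) (hb2 : |b2| ≤ C) (hy1 : |y1| ≤ C) :
    (y2 + (2 * k / ε) * a2 * (a2 - b2) + (1 / ε ^ 2) * (a2 - b2) ^ 2 - 2 * s * a2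
        - (a2 - b2) / (ε * s)) ^ 2
      - (y1 + (2 * k / ε) * a1 * (a1 - b1) + (1 / ε ^ 2) * (a1 - b1) ^ 2 - 2 * s * a1
        - (a1 - b1) / (ε * s)) ^ 2
      - 2 * (y1 + (2 * k / ε) * a1 * (a1 - b1) + (1 / ε ^ 2) * (a1 - b1) ^ 2 - 2 * s * a1
        - (a1 - b1) / (ε * s))
        * ((y2 - y1) + (2 * k / ε) * (a2 - a1) * (a1 - b1)
          + (2 * k / ε) * a1 * ((a2 - a1) - (b2 - b1))
          + (2 / ε ^ 2) * (a1 - b1) * ((a2 - a1) - (b2 - b1))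
          - 2 * s * (a2 - a1) - ((a2 - a1) - (b2 - b1)) / (ε * s))
      ≥ (1 / 2) * (y2 - y1) ^ 2
        - Kone ε C kmax smin smax * ((a2 - a1) ^ 2 + (b2 - b1) ^ 2) := by
  have hs0 : 0 < s := lt_of_lt_of_le hsm hs1
  have hεs : 0 < ε * s := mul_pos hε hs0
  have hεsm : 0 < ε * smin := mul_pos hε hsm
  have hεsm_le : ε * smin ≤ ε * s := mul_le_mul_of_nonneg_left hs1 hε.le
  set d := a1 - b1 with hd_def
  set u := a2 - a1 with hu_def
  set v := b2 - b1 with hv_def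
  set w := u - v with hw_def
  set X := y2 - y1 with hX_def
  set A := y1 + (2 * k / ε) * a1 * d + (1 / ε ^ 2) * d ^ 2 - 2 * s * a1 - d / (ε * s)
    with hA_def
  set Q := (2 * k / ε) * u * w + (1 / ε ^ 2) * w ^ 2 with hQ_def
  set P := u * ((2 * k / ε) * d - 2 * s)
      + w * ((2 * k / ε) * a1 + (2 / ε ^ 2) * d - 1 / (ε * s) + (2 * k / ε) * u
        + (1 / ε ^ 2) * w) with hP_def
  clear_value d u v w X A Q P
  -- basic bounds
  have hkε : |2 * k / ε| ≤ 2 * kmax / ε := by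
    rw [abs_of_nonneg (div_nonneg (by linarith) hε.le)]
    exact div_le_div₀ (by linarith) (by linarith) hε le_rfl
  have hd : |d| ≤ 2 * C := by
    rw [hd_def]
    calc |a1 - b1| ≤ |a1| + |b1| := abs_sub a1 b1
      _ ≤ 2 * C := by linarith
  have hu : |u| ≤ 2 * C := by
    rw [hu_def]
    calc |a2 - a1| ≤ |a2| + |a1| := abs_sub a2 a1
      _ ≤ 2 * C := by linarith
  have hv : |v| ≤ 2 * C := by
    rw [hv_def]
    calc |b2 - b1| ≤ |b2| + |b1| := abs_sub b2 b1
      _ ≤ 2 * C := by linarith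
  have hw : |w| ≤ |u| + |v| := by rw [hw_def]; exact abs_sub u v
  have htwos : |2 * s| ≤ 2 * smax := by
    rw [abs_of_nonneg (by linarith)]; linarith
  -- bound on A
  have hA : |A| ≤ KAc ε C kmax smin smax := by
    have t2 : |(2 * k / ε) * a1 * d| ≤ (2 * kmax / ε * C) * (2 * C) :=
      abs_mul_le' (abs_mul_le' hkε ha1) hd
    have t3 : |(1 / ε ^ 2) * d ^ 2| ≤ (1 / ε ^ 2) * (2 * C) ^ 2 := by
      refine abs_mul_le' (le_of_eq (abs_of_nonneg (by positivity))) ?_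
      rw [abs_pow]
      exact pow_le_pow_left₀ (abs_nonneg _) hd 2
    have t4 : |2 * s * a1| ≤ (2 * smax) * C := abs_mul_le' htwos ha1
    have t5 : |d / (ε * s)| ≤ (2 * C) / (ε * smin) := by
      rw [abs_div, abs_of_pos hεs]
      exact div_le_div₀ (by linarith) hd hεsm hεsm_le
    have s1 := abs_sub (y1 + (2 * k / ε) * a1 * d + (1 / ε ^ 2) * d ^ 2 - 2 * s * a1)
      (d / (ε * s))
    have s2 := abs_sub (y1 + (2 * k / ε) * a1 * d + (1 / ε ^ 2) * d ^ 2) (2 * s * a1)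
    have s3 := abs_add_le (y1 + (2 * k / ε) * a1 * d) ((1 / ε ^ 2) * d ^ 2)
    have s4 := abs_add_le y1 ((2 * k / ε) * a1 * d)
    rw [hA_def]
    unfold KAc
    linarith only [s1, s2, s3, s4, t2, t3, t4, t5, hy1]
  have hKAnn : 0 ≤ KAc ε C kmax smin smax := (abs_nonneg A).trans hA
  have hKQnn : 0 ≤ KQc ε kmax := by
    have h1 : 0 ≤ 3 * kmax / ε := div_nonneg (by linarith) hε.le
    have h2 : (0:ℝ) ≤ 2 / ε ^ 2 := by positivity
    unfold KQc
    ring_nf at h1 h2 ⊢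
    linarith only [h1, h2]
  -- bound on Q
  have hknn : (0:ℝ) ≤ 2 * kmax / ε := div_nonneg (by linarith) hε.le
  have hQ : |Q| ≤ KQc ε kmax * (u ^ 2 + v ^ 2) := by
    have q1 : |(2 * k / ε) * u * w| ≤ (2 * kmax / ε) * (|u| * |w|) := by
      rw [abs_mul, abs_mul, mul_assoc]
      exact mul_le_mul_of_nonneg_right hkε (by positivity)
    have q2 : |(1 / ε ^ 2) * w ^ 2| = (1 / ε ^ 2) * w ^ 2 := abs_of_nonneg (by positivity)
    have q3 : |u| * |w| ≤ (3 / 2) * (u ^ 2 + v ^ 2) := by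
      have g1 := mul_le_mul_of_nonneg_left hw (abs_nonneg u)
      have g2 := sq_nonneg (|u| - |v|)
      have g3 := sq_abs u
      have g4 := sq_abs v
      have g5 := sq_nonneg v
      ring_nf at g1 g2 g3 g4 g5 ⊢
      linarith only [g1, g2, g3, g4, g5]
    have q4 : w ^ 2 ≤ 2 * (u ^ 2 + v ^ 2) := by
      calc w ^ 2 = (u - v) ^ 2 := by rw [hw_def]
        _ ≤ 2 * (u ^ 2 + v ^ 2) := by linarith only [sq_nonneg (u + v)]
    have q5 := abs_add_le ((2 * k / ε) * u * w) ((1 / ε ^ 2) * w ^ 2)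
    have q6 := mul_le_mul_of_nonneg_left q3 hknn
    have q7 := mul_le_mul_of_nonneg_left q4 (show (0:ℝ) ≤ 1 / ε ^ 2 by positivity)
    rw [hQ_def]
    unfold KQc
    ring_nf at q1 q2 q5 q6 q7 ⊢
    linarith only [q1, q2, q5, q6, q7]
  -- bound on P
  have hT : |(2 * k / ε) * d - 2 * s| ≤ T0c ε C kmax smax := by
    have := abs_sub ((2 * k / ε) * d) (2 * s)
    have h1 : |(2 * k / ε) * d| ≤ (2 * kmax / ε) * (2 * C) := abs_mul_le' hkε hd
    unfold T0c
    ring_nf at this h1 htwos ⊢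
    linarith only [this, h1, htwos]
  have hR : |(2 * k / ε) * a1 + (2 / ε ^ 2) * d - 1 / (ε * s) + (2 * k / ε) * u
      + (1 / ε ^ 2) * w| ≤ R0c ε C kmax smin := by
    have r1 := abs_add_le ((2 * k / ε) * a1 + (2 / ε ^ 2) * d - 1 / (ε * s) + (2 * k / ε) * u)
      ((1 / ε ^ 2) * w)
    have r2 := abs_add_le ((2 * k / ε) * a1 + (2 / ε ^ 2) * d - 1 / (ε * s)) ((2 * k / ε) * u)
    have r3 := abs_sub ((2 * k / ε) * a1 + (2 / ε ^ 2) * d) (1 / (ε * s))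
    have r4 := abs_add_le ((2 * k / ε) * a1) ((2 / ε ^ 2) * d)
    have b1' : |(2 * k / ε) * a1| ≤ (2 * kmax / ε) * C := abs_mul_le' hkε ha1
    have b2' : |(2 / ε ^ 2) * d| ≤ (2 / ε ^ 2) * (2 * C) :=
      abs_mul_le' (le_of_eq (abs_of_nonneg (by positivity))) hd
    have b3' : |1 / (ε * s)| ≤ 1 / (ε * smin) := by
      rw [abs_of_pos (one_div_pos.mpr hεs)]
      exact one_div_le_one_div_of_le hεsm hεsm_le
    have b4' : |(2 * k / ε) * u| ≤ (2 * kmax / ε) * (2 * C) := abs_mul_le' hkε hu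
    have b5' : |(1 / ε ^ 2) * w| ≤ (1 / ε ^ 2) * (4 * C) := by
      refine abs_mul_le' (le_of_eq (abs_of_nonneg (by positivity))) ?_
      calc |w| ≤ |u| + |v| := hw
        _ ≤ 4 * C := by linarith
    unfold R0c
    ring_nf at r1 r2 r3 r4 b1' b2' b3' b4' b5' ⊢
    linarith only [r1, r2, r3, r4, b1', b2', b3', b4', b5']
  have hT0nn : 0 ≤ T0c ε C kmax smax := (abs_nonneg _).trans hT
  have hR0nn : 0 ≤ R0c ε C kmax smin := (abs_nonneg _).trans hR
  have hPle : |P| ≤ (T0c ε C kmax smax + R0c ε C kmax smin) * (|u| + |v|) := by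
    have p1 := abs_add_le (u * ((2 * k / ε) * d - 2 * s))
      (w * ((2 * k / ε) * a1 + (2 / ε ^ 2) * d - 1 / (ε * s) + (2 * k / ε) * u
        + (1 / ε ^ 2) * w))
    have p2 : |u * ((2 * k / ε) * d - 2 * s)| ≤ |u| * T0c ε C kmax smax := by
      rw [abs_mul]; exact mul_le_mul_of_nonneg_left hT (abs_nonneg u)
    have p3 : |w * ((2 * k / ε) * a1 + (2 / ε ^ 2) * d - 1 / (ε * s) + (2 * k / ε) * u
        + (1 / ε ^ 2) * w)| ≤ |w| * R0c ε C kmax smin := by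
      rw [abs_mul]; exact mul_le_mul_of_nonneg_left hR (abs_nonneg w)
    have p4 := mul_le_mul_of_nonneg_right hw hR0nn
    have p5 := mul_nonneg hT0nn (abs_nonneg v)
    have p6 := mul_nonneg hR0nn (abs_nonneg u)
    rw [hP_def]
    ring_nf at p1 p2 p3 p4 p5 p6 ⊢
    linarith only [p1, p2, p3, p4, p5, p6]
  have hP2 : P ^ 2 ≤ (2 * (T0c ε C kmax smax + R0c ε C kmax smin) ^ 2) * (u ^ 2 + v ^ 2) := by
    have h6 : P ^ 2 ≤ (T0c ε C kmax smax + R0c ε C kmax smin) ^ 2 * (|u| + |v|) ^ 2 := by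
      rw [← sq_abs P]
      calc |P| ^ 2 ≤ ((T0c ε C kmax smax + R0c ε C kmax smin) * (|u| + |v|)) ^ 2 :=
            pow_le_pow_left₀ (abs_nonneg _) hPle 2
        _ = (T0c ε C kmax smax + R0c ε C kmax smin) ^ 2 * (|u| + |v|) ^ 2 := by ring
    have e7 : (T0c ε C kmax smax + R0c ε C kmax smin) ^ 2 * |u| ^ 2
        = (T0c ε C kmax smax + R0c ε C kmax smin) ^ 2 * u ^ 2 := by rw [sq_abs]
    have e8 : (T0c ε C kmax smax + R0c ε C kmax smin) ^ 2 * |v| ^ 2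
        = (T0c ε C kmax smax + R0c ε C kmax smin) ^ 2 * v ^ 2 := by rw [sq_abs]
    have h9 : 0 ≤ (T0c ε C kmax smax + R0c ε C kmax smin) ^ 2 * (|u| - |v|) ^ 2 :=
      mul_nonneg (sq_nonneg _) (sq_nonneg _)
    ring_nf at h6 e7 e8 h9 ⊢
    linarith only [h6, e7, e8, h9]
  -- the algebraic identity
  have key : (y2 + (2 * k / ε) * a2 * (a2 - b2) + (1 / ε ^ 2) * (a2 - b2) ^ 2 - 2 * s * a2
        - (a2 - b2) / (ε * s)) ^ 2
      - A ^ 2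
      - 2 * A * (X + (2 * k / ε) * u * d + (2 * k / ε) * a1 * w + (2 / ε ^ 2) * d * w
        - 2 * s * u - w / (ε * s))
      = (X + P) ^ 2 + 2 * A * Q := by
    rw [hA_def, hQ_def, hP_def, hX_def, hw_def, hu_def, hv_def, hd_def]
    ring
  have halg := alg (X := X) (P := P) (A := A) (Q := Q) (S := u ^ 2 + v ^ 2)
    (by positivity) hKAnn hKQnn hA hQ hP2
  unfold Kone
  calc (1 / 2) * X ^ 2
      - (2 * (T0c ε C kmax smax + R0c ε C kmax smin) ^ 2
        + 2 * (KAc ε C kmax smin smax * KQc ε kmax) + 1) * (u ^ 2 + v ^ 2)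
      ≤ (X + P) ^ 2 + 2 * A * Q := halg
    _ = _ := key.symm

/-- Pointwise lower bound (6.7) for the second-order remainder of `L₁²`. -/
theorem pointwise_remainder_bound_L1 (Z ε kmin kmax C : ℝ) (hZ : 0 < Z)
    (hε : ε ∈ Set.Ioo (0:ℝ) 1) (hkmin : 0 < kmin) (hkk : kmin ≤ kmax) (hC : 0 < C) :
    ∃ C₁ : ℝ, 0 < C₁ ∧
      ∀ k ∈ Set.Icc kmin kmax,
      ∀ q₁ r₁ q₂ r₂ : ℝ → ℝ,
      ContDiff ℝ 2 q₁ → ContDiff ℝ 2 r₁ → ContDiff ℝ 2 q₂ → ContDiff ℝ 2 r₂ →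
      (∀ z ∈ Set.Icc (0:ℝ) Z,
        |deriv q₁ z| ≤ C ∧ |deriv r₁ z| ≤ C ∧ |deriv q₂ z| ≤ C ∧ |deriv r₂ z| ≤ C ∧
        |deriv (deriv q₁) z| ≤ C) →
      ∀ h₁ h₂ : ℝ → ℝ,
      h₁ = (fun z => q₂ z - q₁ z) → h₂ = (fun z => r₂ z - r₁ z) →
      ∀ z ∈ Set.Icc (0:ℝ) Z,
        (L1 ε k q₂ r₂ z) ^ 2 - (L1 ε k q₁ r₁ z) ^ 2
            - 2 * L1 ε k q₁ r₁ z * L1lin ε k q₁ r₁ h₁ h₂ z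
          ≥ (1/2) * (deriv (deriv h₁) z) ^ 2
            - C₁ * ((deriv h₁ z) ^ 2 + (deriv h₂ z) ^ 2) := by
  obtain ⟨hε0, hε1⟩ := hε
  have hkmax : 0 < kmax := hkmin.trans_le hkk
  have hsm : 0 < Real.sqrt kmin := Real.sqrt_pos.mpr hkmin
  refine ⟨Kone ε C kmax (Real.sqrt kmin) (Real.sqrt kmax), ?_, ?_⟩
  · have hKA : 0 ≤ KAc ε C kmax (Real.sqrt kmin) (Real.sqrt kmax) := by
      unfold KAc
      have h1 : (0:ℝ) ≤ 2 * kmax / ε * C * (2 * C) :=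
        mul_nonneg (mul_nonneg (div_nonneg (by linarith) hε0.le) hC.le) (by linarith)
      have h2 : (0:ℝ) ≤ (1 / ε ^ 2) * (2 * C) ^ 2 := by positivity
      have h3 : (0:ℝ) ≤ (2 * Real.sqrt kmax) * C :=
        mul_nonneg (by positivity) hC.le
      have h4 : (0:ℝ) ≤ (2 * C) / (ε * Real.sqrt kmin) :=
        div_nonneg (by linarith) (mul_nonneg hε0.le (Real.sqrt_nonneg _))
      ring_nf at h1 h2 h3 h4 ⊢
      linarith only [h1, h2, h3, h4, hC]
    have hKQ : 0 ≤ KQc ε kmax := by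
      unfold KQc
      have h1 : 0 ≤ 3 * kmax / ε := div_nonneg (by linarith) hε0.le
      have h2 : (0:ℝ) ≤ 2 / ε ^ 2 := by positivity
      linarith
    have h5 : (0:ℝ) ≤ 2 * (T0c ε C kmax (Real.sqrt kmax) + R0c ε C kmax (Real.sqrt kmin)) ^ 2 :=
      by positivity
    have h6 : 0 ≤ KAc ε C kmax (Real.sqrt kmin) (Real.sqrt kmax) * KQc ε kmax :=
      mul_nonneg hKA hKQ
    unfold Kone
    linarith
  intro k hk q₁ r₁ q₂ r₂ hq₁ hr₁ hq₂ hr₂ hbnd h₁ h₂ hh₁ hh₂ z hz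
  obtain ⟨hba, hbb, hbc, hbe, hby⟩ := hbnd z hz
  -- differentiability
  have hsplit : ∀ f : ℝ → ℝ, ContDiff ℝ 2 f → Differentiable ℝ f ∧ Differentiable ℝ (deriv f) := by
    intro f hf
    have h2 : ContDiff ℝ ((1:ℕ) + 1) f := by exact_mod_cast hf
    have h := contDiff_succ_iff_deriv.mp h2
    exact ⟨h.1, h.2.2.differentiable (by norm_num)⟩
  obtain ⟨hdq₁, hdq₁'⟩ := hsplit q₁ hq₁
  obtain ⟨hdr₁, hdr₁'⟩ := hsplit r₁ hr₁
  obtain ⟨hdq₂, hdq₂'⟩ := hsplit q₂ hq₂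
  obtain ⟨hdr₂, hdr₂'⟩ := hsplit r₂ hr₂
  have e1 : deriv h₁ = fun t => deriv q₂ t - deriv q₁ t := by
    funext t
    rw [hh₁]
    exact deriv_sub (hdq₂ t) (hdq₁ t)
  have e1' : deriv h₁ z = deriv q₂ z - deriv q₁ z := by rw [e1]
  have e2 : deriv (deriv h₁) z = deriv (deriv q₂) z - deriv (deriv q₁) z := by
    rw [e1]
    exact deriv_sub (hdq₂' z) (hdq₁' z)
  have e3 : deriv h₂ z = deriv r₂ z - deriv r₁ z := by
    rw [hh₂]
    exact deriv_sub (hdr₂ z) (hdr₁ z)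
  have key := master ε (Real.sqrt k) k C kmax (Real.sqrt kmin) (Real.sqrt kmax)
    (deriv q₁ z) (deriv r₁ z) (deriv q₂ z) (deriv r₂ z)
    (deriv (deriv q₁) z) (deriv (deriv q₂) z)
    hε0 hsm (Real.sqrt_le_sqrt hk.1) (Real.sqrt_le_sqrt hk.2)
    (by linarith [hk.1]) hk.2 hC hba hbb hbc hbe hby
  simp only [L1, L1lin, e2, e1', e3]
  exact key
end
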